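/- arXiv:math/0612293 — 12 statements merged into one kernel-verified Lean document; each statement's English description precedes it below -/
import Mathlib

section
/- If μ is a convex mean on a complete metric space X (a symmetric binary mean satisfying d(x#z, y#z) ≤ (1/2)d(x,y) for all x,y,z), then for all x,y ∈ X the point x#y is a metric midpoint of x and y, i.e., d(x, x#y) = d(x#y, y) = (1/2)d(x,y). -/
theorem convex_mean_midpoint {X : Type*} [MetricSpace X] [CompleteSpace X]
    (m : X → X → X) (hmean : ∀ x, m x x = x) (hsym : ∀ x y, m x y = m y x)
    (hconv : ∀ x y z, dist (m x z) (m y z) ≤ (1/2) * dist x y) :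
    ∀ x y : X, dist x (m x y) = (1/2) * dist x y ∧ dist (m x y) y = (1/2) * dist x y := by
  intro x y
  have ha : dist x (m x y) ≤ (1/2) * dist x y := by
    have := hconv x y x
    rw [hsym y x] at this
    simpa [hmean] using this
  have hb : dist (m x y) y ≤ (1/2) * dist x y := by
    have := hconv x y y
    simpa [hmean, dist_comm] using this
  have htri := dist_triangle x (m x y) y
  constructor <;> linarith
end

section
/- Let μ: X^k → X be a coordinatewise ρ-contractive k-mean (0 < ρ < 1) on a metric space X, and let β: X^{k+1} → X^{k+1} be the barycentric operator β(x)_i = μ(π_{≠i} x). Then for any x ∈ X^{k+1}, any i, and any n ≥ 1, d((β^n x)_i, (β^n x)_{i+1}) ≤ ρ^n d(x_i, x_{i+1}). -/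
/-- A `k`-mean: idempotent on constant tuples. -/
def IsMean {X : Type*} {k : ℕ} (μ : (Fin k → X) → X) : Prop :=
  ∀ x : X, μ (fun _ => x) = x

/-- The barycentric operator: the `i`-th coordinate is the mean of the tuple
with the `i`-th coordinate deleted. -/
def bary {X : Type*} {k : ℕ} (μ : (Fin k → X) → X) (x : Fin (k+1) → X) : Fin (k+1) → X :=
  fun i => μ (fun j => x (i.succAbove j))

/-- Nonexpansive mean: `d(μ x, μ y) ≤ max_j d(x_j, y_j)`. -/
def Nonexpansive {X : Type*} [MetricSpace X] {k : ℕ} (μ : (Fin k → X) → X) : Prop :=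
  ∀ x y : Fin k → X, dist (μ x) (μ y) ≤ ⨆ j, dist (x j) (y j)

/-- Coordinatewise `ρ`-contractive mean. -/
def CoordContractive {X : Type*} [MetricSpace X] {k : ℕ} (ρ : ℝ) (μ : (Fin k → X) → X) : Prop :=
  ∀ (x y : Fin k → X) (j : Fin k), (∀ i, i ≠ j → x i = y i) →
    dist (μ x) (μ y) ≤ ρ * dist (x j) (y j)

/-- Diameter of a tuple. -/
noncomputable def tupDiam {X : Type*} [MetricSpace X] {k : ℕ} (x : Fin k → X) : ℝ :=
  ⨆ p : Fin k × Fin k, dist (x p.1) (x p.2)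

theorem adjacent_coordinates_contract {X : Type*} [MetricSpace X] {k : ℕ}
    (μ : (Fin k → X) → X) {ρ : ℝ} (hρ0 : 0 < ρ) (hρ1 : ρ < 1)
    (hmean : IsMean μ) (hcon : CoordContractive ρ μ) :
    ∀ (x : Fin (k+1) → X) (i : Fin k) (n : ℕ), 1 ≤ n →
      dist ((bary μ)^[n] x i.castSucc) ((bary μ)^[n] x i.succ) ≤
        ρ ^ n * dist (x i.castSucc) (x i.succ) := by
  have key : ∀ (y : Fin (k+1) → X) (i : Fin k),
      dist (bary μ y i.castSucc) (bary μ y i.succ) ≤ ρ * dist (y i.castSucc) (y i.succ) := by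
    intro y i
    have h := hcon (fun j => y (i.castSucc.succAbove j)) (fun j => y (i.succ.succAbove j)) i ?_
    · simpa [bary, Fin.succAbove_castSucc_self, Fin.succAbove_succ_self, dist_comm] using h
    · intro j hj
      show y (i.castSucc.succAbove j) = y (i.succ.succAbove j)
      rcases lt_or_gt_of_ne hj with hlt | hlt
      · rw [Fin.succAbove_of_castSucc_lt _ _ (Fin.castSucc_lt_castSucc_iff.mpr hlt),
          Fin.succAbove_of_castSucc_lt _ _ (Fin.castSucc_lt_succ_iff.mpr hlt.le)]
      · rw [Fin.succAbove_of_le_castSucc _ _ (Fin.castSucc_le_castSucc_iff.mpr hlt.le),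
          Fin.succAbove_of_le_castSucc _ _ (Fin.succ_le_castSucc_iff.mpr hlt)]
  have main : ∀ (x : Fin (k+1) → X) (i : Fin k) (n : ℕ),
      dist ((bary μ)^[n] x i.castSucc) ((bary μ)^[n] x i.succ) ≤
        ρ ^ n * dist (x i.castSucc) (x i.succ) := by
    intro x i n
    induction n with
    | zero => simp
    | succ n ih =>
      rw [Function.iterate_succ_apply']
      calc dist (bary μ ((bary μ)^[n] x) i.castSucc) (bary μ ((bary μ)^[n] x) i.succ)
          ≤ ρ * dist ((bary μ)^[n] x i.castSucc) ((bary μ)^[n] x i.succ) := key _ _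
        _ ≤ ρ * (ρ ^ n * dist (x i.castSucc) (x i.succ)) := by
            exact mul_le_mul_of_nonneg_left ih hρ0.le
        _ = ρ ^ (n+1) * dist (x i.castSucc) (x i.succ) := by ring
  exact fun x i n _ => main x i n
end

section
/- If μ: X^k → X is a coordinatewise ρ-contractive k-mean for some 0 < ρ < 1 on a metric space X, then μ is weakly β-contractive: for every x ∈ X^{k+1}, the diameter Δ(β^n(x)) of the tuple β^n(x) satisfies Δ(β^n(x)) ≤ k ρ^n Δ(x); in particular Δ(β^n(x)) → 0 as n → ∞. -/
/-- Path length of a tuple. -/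
noncomputable def tupPath {X : Type*} [MetricSpace X] {k : ℕ} (x : Fin (k+1) → X) : ℝ :=
  ∑ m : Fin k, dist (x m.castSucc) (x m.succ)

lemma tupPath_nonneg {X : Type*} [MetricSpace X] {k : ℕ} (x : Fin (k+1) → X) :
    0 ≤ tupPath x :=
  Finset.sum_nonneg fun _ _ => dist_nonneg

lemma tupDiam_nonneg {X : Type*} [MetricSpace X] {k : ℕ} (x : Fin k → X) :
    0 ≤ tupDiam x := by
  rcases Nat.eq_zero_or_pos k with h | h
  · subst h
    simp [tupDiam, Real.iSup_of_isEmpty]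
  · exact Real.iSup_nonneg fun _ => dist_nonneg

lemma dist_le_tupPath {X : Type*} [MetricSpace X] {k : ℕ} (x : Fin (k+1) → X)
    (i j : Fin (k+1)) (h : (i : ℕ) ≤ (j : ℕ)) : dist (x i) (x j) ≤ tupPath x := by
  set f : ℕ → X := fun t => x ⟨min t k, by omega⟩ with hf
  have hfi : f (i : ℕ) = x i := by
    simp only [hf]; congr 1; exact Fin.ext (by simp; omega)
  have hfj : f (j : ℕ) = x j := by
    simp only [hf]; congr 1; exact Fin.ext (by simp; omega)
  have h1 : dist (x i) (x j) ≤ ∑ t ∈ Finset.Ico (i : ℕ) (j : ℕ), dist (f t) (f (t+1)) := by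
    rw [← hfi, ← hfj]; exact dist_le_Ico_sum_dist f h
  have h2 : ∑ t ∈ Finset.Ico (i : ℕ) (j : ℕ), dist (f t) (f (t+1)) ≤
      ∑ t ∈ Finset.range k, dist (f t) (f (t+1)) := by
    apply Finset.sum_le_sum_of_subset_of_nonneg
    · intro t ht
      simp only [Finset.mem_Ico] at ht
      simp only [Finset.mem_range]
      omega
    · intro _ _ _; exact dist_nonneg
  have h3 : ∑ t ∈ Finset.range k, dist (f t) (f (t+1)) = tupPath x := by
    rw [tupPath, ← Fin.sum_univ_eq_sum_range]
    apply Finset.sum_congr rfl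
    intro m _
    congr 1 <;> · simp only [hf]; congr 1; apply Fin.ext; simp; try omega
  linarith

lemma tupDiam_le_tupPath {X : Type*} [MetricSpace X] {k : ℕ} (x : Fin (k+1) → X) :
    tupDiam x ≤ tupPath x := by
  apply ciSup_le
  intro p
  rcases le_total ((p.1 : ℕ)) ((p.2 : ℕ)) with h | h
  · exact dist_le_tupPath x p.1 p.2 h
  · rw [dist_comm]; exact dist_le_tupPath x p.2 p.1 h

lemma dist_le_tupDiam {X : Type*} [MetricSpace X] {k : ℕ} (x : Fin k → X) (i j : Fin k) :
    dist (x i) (x j) ≤ tupDiam x :=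
  le_ciSup (f := fun p : Fin k × Fin k => dist (x p.1) (x p.2))
    (Set.Finite.bddAbove (Set.finite_range _)) ⟨i, j⟩

lemma tupPath_le {X : Type*} [MetricSpace X] {k : ℕ} (x : Fin (k+1) → X) :
    tupPath x ≤ (k : ℝ) * tupDiam x := by
  calc tupPath x ≤ ∑ _m : Fin k, tupDiam x :=
        Finset.sum_le_sum fun m _ => dist_le_tupDiam x m.castSucc m.succ
    _ = (k : ℝ) * tupDiam x := by simp [mul_comm]

lemma tupPath_bary_le {X : Type*} [MetricSpace X] {k : ℕ}
    (μ : (Fin k → X) → X) {ρ : ℝ} (hcon : CoordContractive ρ μ) (x : Fin (k+1) → X) :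
    tupPath (bary μ x) ≤ ρ * tupPath x := by
  rw [tupPath, tupPath, Finset.mul_sum]
  apply Finset.sum_le_sum
  intro m _
  have key : dist (bary μ x m.castSucc) (bary μ x m.succ) ≤
      ρ * dist (x (m.castSucc.succAbove m)) (x (m.succ.succAbove m)) := by
    apply hcon
    intro j hj
    congr 1
    rcases lt_or_gt_of_ne hj with h | h
    · rw [Fin.succAbove_of_castSucc_lt _ _ (by exact_mod_cast Fin.castSucc_lt_castSucc_iff.mpr h),
        Fin.succAbove_of_castSucc_lt _ _ (lt_of_lt_of_le
          (Fin.castSucc_lt_castSucc_iff.mpr h) (Fin.castSucc_le_succ m))]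
    · rw [Fin.succAbove_of_le_castSucc _ _ (le_of_lt (Fin.castSucc_lt_castSucc_iff.mpr h)),
        Fin.succAbove_of_le_castSucc _ _ (Fin.succ_le_castSucc_iff.mpr h)]
  rw [Fin.succAbove_castSucc_self, Fin.succAbove_succ_self, dist_comm (x m.succ)] at key
  exact key

theorem coord_contractive_weakly_beta_contractive {X : Type*} [MetricSpace X] {k : ℕ}
    (μ : (Fin k → X) → X) {ρ : ℝ} (hρ0 : 0 < ρ) (hρ1 : ρ < 1)
    (hmean : IsMean μ) (hcon : CoordContractive ρ μ) :
    ∀ x : Fin (k+1) → X,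
      (∀ n : ℕ, tupDiam ((bary μ)^[n] x) ≤ (k : ℝ) * ρ ^ n * tupDiam x) ∧
      Filter.Tendsto (fun n => tupDiam ((bary μ)^[n] x)) Filter.atTop (nhds 0) := by
  intro x
  have hpath : ∀ n : ℕ, tupPath ((bary μ)^[n] x) ≤ ρ ^ n * tupPath x := by
    intro n
    induction n with
    | zero => simp
    | succ n ih =>
      rw [Function.iterate_succ_apply']
      calc tupPath (bary μ ((bary μ)^[n] x)) ≤ ρ * tupPath ((bary μ)^[n] x) :=
            tupPath_bary_le μ hcon _
        _ ≤ ρ * (ρ ^ n * tupPath x) := by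
            exact mul_le_mul_of_nonneg_left ih (le_of_lt hρ0)
        _ = ρ ^ (n + 1) * tupPath x := by ring
  have hmain : ∀ n : ℕ, tupDiam ((bary μ)^[n] x) ≤ (k : ℝ) * ρ ^ n * tupDiam x := by
    intro n
    calc tupDiam ((bary μ)^[n] x) ≤ tupPath ((bary μ)^[n] x) := tupDiam_le_tupPath _
      _ ≤ ρ ^ n * tupPath x := hpath n
      _ ≤ ρ ^ n * ((k : ℝ) * tupDiam x) :=
          mul_le_mul_of_nonneg_left (tupPath_le x) (pow_nonneg (le_of_lt hρ0) n)
      _ = (k : ℝ) * ρ ^ n * tupDiam x := by ring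
  refine ⟨hmain, ?_⟩
  apply squeeze_zero (fun n => tupDiam_nonneg _) hmain
  have h1 : Filter.Tendsto (fun n : ℕ => ρ ^ n) Filter.atTop (nhds 0) :=
    tendsto_pow_atTop_nhds_zero_of_lt_one (le_of_lt hρ0) hρ1
  have h2 := (h1.const_mul (k : ℝ)).mul_const (tupDiam x)
  simpa using h2
end

section
/- Let X be a complete metric space equipped with a nonexpansive, coordinatewise ρ-contractive k-mean μ (0 < ρ < 1). Then the barycentric operator β is power convergent, and the resulting (k+1)-mean μ̃ (defined by μ̃(x) = lim of the common value of β^n(x)) is nonexpansive and coordinatewise ρ-contractive. -/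
/-!
The path length `∑ d(x_i, x_{i+1})` of a tuple bounds all its pairwise distances, and `β`
contracts it by `ρ`. Each application of `β` moves a tuple by at most its path length, so the
orbit `βⁿ x` is Cauchy, and its limit has path length zero, i.e. is constant. Since `β` is
nonexpansive for the sup metric, the distance between the limits of two orbits is bounded by
their distance at any stage: stage `0` gives nonexpansiveness of the limit mean and stage `1`
its coordinatewise `ρ`-contractivity.
-/

open Filter Topology Finset

lemma iSup_dist_eq_dist {X ι : Type*} [PseudoMetricSpace X] [Fintype ι] (x y : ι → X) :
    ⨆ i, dist (x i) (y i) = dist x y :=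
  le_antisymm (Real.iSup_le (dist_le_pi_dist x y) dist_nonneg)
    ((dist_pi_le_iff (Real.iSup_nonneg fun _ => dist_nonneg)).2 fun i =>
      le_ciSup (f := fun i => dist (x i) (y i)) (Finite.bddAbove_range _) i)

section PathLength

variable {X : Type*} [PseudoMetricSpace X] {k : ℕ}

def pathLength (x : Fin (k+1) → X) : ℝ :=
  ∑ i : Fin k, dist (x i.castSucc) (x i.succ)

lemma dist_le_pathLength (x : Fin (k+1) → X) (p q : Fin (k+1)) :
    dist (x p) (x q) ≤ pathLength x := by
  wlog hpq : p ≤ q generalizing p q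
  · rw [dist_comm]; exact this q p (le_of_not_ge hpq)
  set f : ℕ → X := fun n => x (Fin.clamp n k) with hf
  have hfx : ∀ i : Fin (k+1), f i = x i := fun i => by
    simp [hf, Fin.clamp, Nat.min_eq_left (Nat.lt_succ_iff.1 i.isLt)]
  calc dist (x p) (x q) = dist (f p) (f q) := by rw [hfx, hfx]
    _ ≤ ∑ i ∈ Ico (p : ℕ) q, dist (f i) (f (i + 1)) := dist_le_Ico_sum_dist f hpq
    _ ≤ ∑ i ∈ range k, dist (f i) (f (i + 1)) :=
      sum_le_sum_of_subset_of_nonneg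
        (fun i hi => by simp only [mem_Ico, mem_range] at hi ⊢; omega) fun _ _ _ => dist_nonneg
    _ = pathLength x := by
      rw [pathLength, ← Fin.sum_univ_eq_sum_range (fun i => dist (f i) (f (i + 1)))]
      refine sum_congr rfl fun i _ => ?_
      rw [← hfx i.castSucc, ← hfx i.succ]; rfl

lemma pathLength_nonneg (x : Fin (k+1) → X) : 0 ≤ pathLength x :=
  dist_nonneg.trans (dist_le_pathLength x 0 0)

lemma continuous_pathLength : Continuous (pathLength : (Fin (k+1) → X) → ℝ) :=
  continuous_finsetSum _ fun _ _ => (continuous_apply _).dist (continuous_apply _)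

end PathLength

lemma eq_const_of_pathLength_eq_zero {X : Type*} [MetricSpace X] {k : ℕ} {x : Fin (k+1) → X}
    (hx : pathLength x = 0) :
    x = fun _ => x 0 :=
  funext fun i => dist_le_zero.1 (hx ▸ dist_le_pathLength x i 0)

lemma bary_const {X : Type*} {k : ℕ} {μ : (Fin k → X) → X} (hmean : IsMean μ) (c : X) :
    bary μ (fun _ => c) = fun _ => c :=
  funext fun _ => hmean c

section Bary

variable {X : Type*} [MetricSpace X] {k : ℕ} {μ : (Fin k → X) → X}

lemma lipschitzWith_bary (hne : Nonexpansive μ) : LipschitzWith 1 (bary μ) := by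
  refine LipschitzWith.of_dist_le_mul fun x y => ?_
  rw [NNReal.coe_one, one_mul, dist_pi_le_iff dist_nonneg]
  intro i
  calc dist (bary μ x i) (bary μ y i)
      ≤ ⨆ j, dist (x (i.succAbove j)) (y (i.succAbove j)) := hne _ _
    _ ≤ dist x y := Real.iSup_le (fun j => dist_le_pi_dist x y _) dist_nonneg

lemma dist_bary_self_le (hmean : IsMean μ) (hne : Nonexpansive μ) (x : Fin (k+1) → X) :
    dist (bary μ x) x ≤ pathLength x := by
  refine (dist_pi_le_iff (pathLength_nonneg x)).2 fun i => ?_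
  calc dist (bary μ x i) (x i) = dist (μ fun j => x (i.succAbove j)) (μ fun _ => x i) := by
        rw [hmean]; rfl
    _ ≤ ⨆ j, dist (x (i.succAbove j)) (x i) := hne _ _
    _ ≤ pathLength x := Real.iSup_le (fun j => dist_le_pathLength x _ _) (pathLength_nonneg x)

lemma succAbove_castSucc_eq_succAbove_succ {i j : Fin k} (hj : j ≠ i) :
    i.castSucc.succAbove j = i.succ.succAbove j := by
  rcases hj.lt_or_gt with h | h
  · rw [Fin.succAbove_castSucc_of_lt _ _ h, Fin.succAbove_succ_of_le _ _ h.le]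
  · rw [Fin.succAbove_castSucc_of_le _ _ h.le, Fin.succAbove_succ_of_lt _ _ h]

/-- Deleting the `i`-th or the `(i+1)`-st entry leaves tuples that differ in one entry only. -/
lemma dist_bary_castSucc_succ_le {ρ : ℝ} (hcon : CoordContractive ρ μ) (x : Fin (k+1) → X)
    (i : Fin k) :
    dist (bary μ x i.castSucc) (bary μ x i.succ) ≤ ρ * dist (x i.castSucc) (x i.succ) := by
  have := hcon (fun j => x (i.castSucc.succAbove j)) (fun j => x (i.succ.succAbove j)) i
    fun j hj => by rw [succAbove_castSucc_eq_succAbove_succ hj]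
  simpa [bary, dist_comm (x i.succ)] using this

lemma pathLength_bary_le {ρ : ℝ} (hcon : CoordContractive ρ μ) (x : Fin (k+1) → X) :
    pathLength (bary μ x) ≤ ρ * pathLength x := by
  rw [pathLength, pathLength, mul_sum]
  exact sum_le_sum fun i _ => dist_bary_castSucc_succ_le hcon x i

lemma pathLength_iterate_bary_le {ρ : ℝ} (hρ : 0 ≤ ρ) (hcon : CoordContractive ρ μ)
    (x : Fin (k+1) → X) (n : ℕ) : pathLength ((bary μ)^[n] x) ≤ ρ ^ n * pathLength x := by
  induction n with
  | zero => simp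
  | succ n ih =>
    rw [Function.iterate_succ_apply', pow_succ', mul_assoc]
    exact (pathLength_bary_le hcon _).trans (mul_le_mul_of_nonneg_left ih hρ)

lemma exists_tendsto_iterate_bary [CompleteSpace X] {ρ : ℝ} (hρ0 : 0 ≤ ρ) (hρ1 : ρ < 1)
    (hmean : IsMean μ) (hne : Nonexpansive μ) (hcon : CoordContractive ρ μ)
    (x : Fin (k+1) → X) :
    ∃ c : X, Tendsto (fun n => (bary μ)^[n] x) atTop (𝓝 fun _ => c) := by
  have hstep (n : ℕ) :
      dist ((bary μ)^[n] x) ((bary μ)^[n+1] x) ≤ pathLength x * ρ ^ n := by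
    rw [dist_comm, Function.iterate_succ_apply', mul_comm]
    exact (dist_bary_self_le hmean hne _).trans (pathLength_iterate_bary_le hρ0 hcon x n)
  obtain ⟨z, hz⟩ := cauchySeq_tendsto_of_complete (cauchySeq_of_le_geometric ρ _ hρ1 hstep)
  have hlen : Tendsto (fun n => pathLength ((bary μ)^[n] x)) atTop (𝓝 0) := by
    refine squeeze_zero (fun n => pathLength_nonneg _)
      (fun n => pathLength_iterate_bary_le hρ0 hcon x n) ?_
    simpa using (tendsto_pow_atTop_nhds_zero_of_lt_one hρ0 hρ1).mul_const (pathLength x)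
  have hz0 : pathLength z = 0 :=
    tendsto_nhds_unique ((continuous_pathLength.tendsto z).comp hz) hlen
  exact ⟨z 0, eq_const_of_pathLength_eq_zero hz0 ▸ hz⟩

lemma dist_le_of_tendsto_iterate_bary (hne : Nonexpansive μ) {x y : Fin (k+1) → X} {a b : X}
    (ha : Tendsto (fun n => (bary μ)^[n] x) atTop (𝓝 fun _ => a))
    (hb : Tendsto (fun n => (bary μ)^[n] y) atTop (𝓝 fun _ => b)) (m : ℕ) :
    dist a b ≤ dist ((bary μ)^[m] x) ((bary μ)^[m] y) := by
  rw [← dist_pi_const a b (β := Fin (k+1))]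
  refine le_of_tendsto' ((ha.comp (tendsto_add_atTop_nat m)).dist
    (hb.comp (tendsto_add_atTop_nat m))) fun n => ?_
  simpa [Function.iterate_add_apply] using
    ((lipschitzWith_bary hne).iterate n).dist_le_mul ((bary μ)^[m] x) ((bary μ)^[m] y)

lemma dist_bary_le_of_eq_of_ne {ρ : ℝ} (hρ : 0 ≤ ρ) (hcon : CoordContractive ρ μ)
    {x y : Fin (k+1) → X} {j : Fin (k+1)} (hxy : ∀ i, i ≠ j → x i = y i) :
    dist (bary μ x) (bary μ y) ≤ ρ * dist (x j) (y j) := by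
  refine (dist_pi_le_iff (mul_nonneg hρ dist_nonneg)).2 fun i => ?_
  by_cases hij : i = j
  · subst hij
    have : (fun l => x (i.succAbove l)) = fun l => y (i.succAbove l) :=
      funext fun l => hxy _ (Fin.succAbove_ne i l)
    simp only [bary, this, dist_self]
    exact mul_nonneg hρ dist_nonneg
  · obtain ⟨l, rfl⟩ := Fin.exists_succAbove_eq (Ne.symm hij)
    exact hcon _ _ l fun l' hl' => hxy _ (Fin.succAbove_right_injective.ne hl')

end Bary

theorem extension_exists_nonexpansive_contractive_general {X : Type*} [MetricSpace X] [CompleteSpace X]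
    {k : ℕ} (μ : (Fin k → X) → X) {ρ : ℝ} (hρ0 : 0 < ρ) (hρ1 : ρ < 1)
    (hmean : IsMean μ) (hne : Nonexpansive μ) (hcon : CoordContractive ρ μ) :
    ∃ ν : (Fin (k+1) → X) → X,
      (∀ x : Fin (k+1) → X,
        Filter.Tendsto (fun n => (bary μ)^[n] x) Filter.atTop (nhds fun _ => ν x)) ∧
      IsMean ν ∧ Nonexpansive ν ∧ CoordContractive ρ ν := by
  choose ν hν using exists_tendsto_iterate_bary hρ0.le hρ1 hmean hne hcon
  refine ⟨ν, hν, fun c => ?_, ?_, fun x y j hxy => ?_⟩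
  · have hc := hν fun _ => c
    simp only [Function.iterate_fixed (bary_const hmean c)] at hc
    exact congrFun (tendsto_nhds_unique hc tendsto_const_nhds) 0
  · intro x y
    rw [iSup_dist_eq_dist]
    exact dist_le_of_tendsto_iterate_bary hne (hν x) (hν y) 0
  · exact (dist_le_of_tendsto_iterate_bary hne (hν x) (hν y) 1).trans
      (dist_bary_le_of_eq_of_ne hρ0.le hcon hxy)

theorem extension_exists_nonexpansive_contractive {X : Type*} [MetricSpace X] [CompleteSpace X]
    {k : ℕ} (hk : 2 ≤ k) (μ : (Fin k → X) → X) {ρ : ℝ} (hρ0 : 0 < ρ) (hρ1 : ρ < 1)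
    (hmean : IsMean μ) (hne : Nonexpansive μ) (hcon : CoordContractive ρ μ) :
    ∃ ν : (Fin (k+1) → X) → X,
      (∀ x : Fin (k+1) → X,
        Filter.Tendsto (fun n => (bary μ)^[n] x) Filter.atTop (nhds fun _ => ν x)) ∧
      IsMean ν ∧ Nonexpansive ν ∧ CoordContractive ρ ν :=
  extension_exists_nonexpansive_contractive_general μ hρ0 hρ1 hmean hne hcon
end

section
/- If a nonexpansive k-mean μ on a metric space X has a β-extension μ̃: X^{k+1} → X (i.e., β^n(x) → (μ̃(x),...,μ̃(x)) for all x ∈ X^{k+1}), then μ̃ is nonexpansive. -/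
theorem beta_extension_nonexpansive {X : Type*} [MetricSpace X]
    {k : ℕ} (μ : (Fin k → X) → X) (hmean : IsMean μ) (hne : Nonexpansive μ)
    (ν : (Fin (k+1) → X) → X)
    (hext : ∀ x : Fin (k+1) → X,
      Filter.Tendsto (fun n => (bary μ)^[n] x) Filter.atTop (nhds fun _ => ν x)) :
    Nonexpansive ν := by
  intro x y
  set D : ℝ := ⨆ j, dist (x j) (y j) with hD
  have hD0 : (0 : ℝ) ≤ D := by
    refine le_trans dist_nonneg (le_ciSup (f := fun j => dist (x j) (y j)) ?_ 0)
    exact (Set.finite_range _).bddAbove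
  have key : ∀ n i, dist ((bary μ)^[n] x i) ((bary μ)^[n] y i) ≤ D := by
    intro n
    induction n with
    | zero =>
      intro i
      exact le_ciSup (f := fun j => dist (x j) (y j)) (Set.finite_range _).bddAbove i
    | succ n ih =>
      intro i
      rw [Function.iterate_succ_apply', Function.iterate_succ_apply']
      refine le_trans (hne _ _) (Real.iSup_le (fun j => ih _) hD0)
  have h1 : Filter.Tendsto (fun n => ((bary μ)^[n] x) 0) Filter.atTop (nhds (ν x)) :=
    ((continuous_apply (0 : Fin (k+1))).continuousAt.tendsto.comp (hext x))
  have h2 : Filter.Tendsto (fun n => ((bary μ)^[n] y) 0) Filter.atTop (nhds (ν y)) :=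
    ((continuous_apply (0 : Fin (k+1))).continuousAt.tendsto.comp (hext y))
  have h3 : Filter.Tendsto (fun n => dist ((bary μ)^[n] x 0) ((bary μ)^[n] y 0))
      Filter.atTop (nhds (dist (ν x) (ν y))) := h1.dist h2
  exact le_of_tendsto h3 (Filter.Eventually.of_forall fun n => key n 0)
end

section
/- Suppose μ: X^k → X is a topological k-mean whose barycentric operator β is power convergent, and define μ̃(x) = x* where β^n(x) → (x*,...,x*). Then μ̃ is a (k+1)-mean satisfying μ̃ ∘ β = μ̃, and any continuous (k+1)-mean ν with ν ∘ β = ν equals μ̃. Moreover if μ is symmetric, so is μ̃. -/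
/-- A symmetric mean: invariant under permutations of its arguments. -/
def SymmetricMean {X : Type*} {k : ℕ} (μ : (Fin k → X) → X) : Prop :=
  ∀ (σ : Equiv.Perm (Fin k)) (x : Fin k → X), μ (x ∘ σ) = μ x

/-!
Write `L x` for the limit of the orbit `f^[n] x` of a self-map `f`. Uniqueness of limits in a
Hausdorff space alone gives `L ∘ f = L`, `L a = a` at fixed points of `f`, `L ∘ g = g ∘ L` for a
continuous `g` commuting with `f`, and `φ ∘ L = φ` for a continuous `f`-invariant `φ`.
For `f = bary μ`, constant tuples are fixed and permuting the coordinates commutes with `bary μ`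
when `μ` is symmetric; reading off one coordinate of `L x = (μ̃ x, …, μ̃ x)` gives the theorem.
-/

open Filter Topology

section IterateLimit

variable {α : Type*} [TopologicalSpace α] {f L : α → α}

theorem iterate_limit_apply_self [T2Space α]
    (hL : ∀ x, Tendsto (fun n => f^[n] x) atTop (𝓝 (L x))) (x : α) : L (f x) = L x := by
  refine tendsto_nhds_unique (hL (f x)) ?_
  simpa only [Function.comp_def, ← Function.iterate_succ_apply] using
    (hL x).comp (tendsto_add_atTop_nat 1)

theorem iterate_limit_eq_of_isFixedPt [T2Space α]
    (hL : ∀ x, Tendsto (fun n => f^[n] x) atTop (𝓝 (L x))) {a : α}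
    (ha : Function.IsFixedPt f a) : L a = a := by
  refine tendsto_nhds_unique (hL a) ?_
  simpa only [Function.iterate_fixed ha] using tendsto_const_nhds

theorem iterate_limit_comm_of_commute [T2Space α]
    (hL : ∀ x, Tendsto (fun n => f^[n] x) atTop (𝓝 (L x))) {g : α → α} (hg : Continuous g)
    (hfg : Function.Commute f g) (x : α) : L (g x) = g (L x) := by
  refine tendsto_nhds_unique (hL (g x)) ?_
  simpa only [Function.comp_def, (hfg.iterate_left _).eq] using (hg.tendsto _).comp (hL x)

theorem apply_iterate_limit_of_invariant {β : Type*} [TopologicalSpace β] [T2Space β]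
    (hL : ∀ x, Tendsto (fun n => f^[n] x) atTop (𝓝 (L x))) {φ : α → β} (hφ : Continuous φ)
    (hinv : ∀ x, φ (f x) = φ x) (x : α) : φ (L x) = φ x := by
  have hconst : ∀ n, φ (f^[n] x) = φ x := fun n => by
    induction n with
    | zero => rfl
    | succ n ih => rw [Function.iterate_succ_apply', hinv, ih]
  refine tendsto_nhds_unique ((hφ.tendsto _).comp (hL x)) ?_
  simpa only [Function.comp_def, hconst] using tendsto_const_nhds

end IterateLimit

theorem Fin.exists_perm_succAbove {k : ℕ} (σ : Equiv.Perm (Fin (k+1))) (i : Fin (k+1)) :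
    ∃ τ : Equiv.Perm (Fin k), ∀ j, σ (i.succAbove j) = (σ i).succAbove (τ j) := by
  let τ : Equiv.Perm (Fin k) := (finSuccAboveEquiv i).trans <|
    (σ.subtypeEquiv (p := (· ≠ i)) fun _ => σ.injective.ne_iff.symm).trans
      (finSuccAboveEquiv (σ i)).symm
  exact ⟨τ, fun j => (congrArg Subtype.val
    ((finSuccAboveEquiv (σ i)).apply_symm_apply ⟨σ (i.succAbove j), _⟩)).symm⟩

section Bary

variable {X : Type*} {k : ℕ} {μ : (Fin k → X) → X}

theorem isFixedPt_bary_const (hμ : IsMean μ) (c : X) :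
    Function.IsFixedPt (bary μ) fun _ => c :=
  funext fun _ => hμ c

theorem bary_comp_perm (hμ : SymmetricMean μ) (σ : Equiv.Perm (Fin (k+1)))
    (x : Fin (k+1) → X) : bary μ (x ∘ σ) = bary μ x ∘ σ := by
  funext i
  obtain ⟨τ, hτ⟩ := Fin.exists_perm_succAbove σ i
  have hreindex : (fun j => x (σ (i.succAbove j))) = (fun j => x ((σ i).succAbove j)) ∘ τ :=
    funext fun j => congrArg x (hτ j)
  exact (congrArg μ hreindex).trans (hμ τ _)

end Bary

theorem beta_limit_is_invariant_extension_general {X : Type*} [TopologicalSpace X] [T2Space X]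
    {k : ℕ} (μ : (Fin k → X) → X) (hmean : IsMean μ)
    (ν : (Fin (k+1) → X) → X)
    (hlim : ∀ x : Fin (k+1) → X,
      Filter.Tendsto (fun n => (bary μ)^[n] x) Filter.atTop (nhds fun _ => ν x)) :
    IsMean ν ∧ (∀ x : Fin (k+1) → X, ν (bary μ x) = ν x) ∧
    (∀ ν' : (Fin (k+1) → X) → X, Continuous ν' → IsMean ν' →
      (∀ x, ν' (bary μ x) = ν' x) → ν' = ν) ∧
    (SymmetricMean μ → SymmetricMean ν) := by
  refine ⟨fun c => ?_, fun x => ?_, fun ν' hcont' hmean' hinv' => ?_, fun hsymm σ x => ?_⟩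
  · exact congrFun (iterate_limit_eq_of_isFixedPt hlim (isFixedPt_bary_const hmean c)) 0
  · exact congrFun (iterate_limit_apply_self hlim x) 0
  · funext x
    rw [← apply_iterate_limit_of_invariant hlim hcont' hinv' x, hmean']
  · have hperm : Continuous fun y : Fin (k+1) → X => y ∘ σ :=
      continuous_pi fun i => continuous_apply (σ i)
    exact congrFun (iterate_limit_comm_of_commute hlim hperm (bary_comp_perm hsymm σ) x) 0

theorem beta_limit_is_invariant_extension {X : Type*} [TopologicalSpace X] [T2Space X]
    {k : ℕ} (μ : (Fin k → X) → X) (hmean : IsMean μ) (hcont : Continuous μ)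
    (ν : (Fin (k+1) → X) → X)
    (hlim : ∀ x : Fin (k+1) → X,
      Filter.Tendsto (fun n => (bary μ)^[n] x) Filter.atTop (nhds fun _ => ν x)) :
    IsMean ν ∧ (∀ x : Fin (k+1) → X, ν (bary μ x) = ν x) ∧
    (∀ ν' : (Fin (k+1) → X) → X, Continuous ν' → IsMean ν' →
      (∀ x, ν' (bary μ x) = ν' x) → ν' = ν) ∧
    (SymmetricMean μ → SymmetricMean ν) :=
  beta_limit_is_invariant_extension_general μ hmean ν hlim
end

section
/- Let λ be a convex mean and ν a nonexpansive 2-mean on a complete metric space X. Define λ_1 = λ, ν_1 = ν, λ_{n+1}(x,y) = λ(λ_n(x,y), ν_n(x,y)), ν_{n+1}(x,y) = ν(λ_n(x,y), ν_n(x,y)). Then for all x,y ∈ X, the sequences λ_n(x,y) and ν_n(x,y) converge to a common limit μ(x,y), and the resulting 2-mean μ is nonexpansive. -/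
/-- The pair of sequences of means `(λ_{n+1}, ν_{n+1})` obtained by iterating
`λ_{n+1}(x,y) = λ(λ_n(x,y), ν_n(x,y))`, `ν_{n+1}(x,y) = ν(λ_n(x,y), ν_n(x,y))`,
starting from `(λ, ν)` at index `0` (so index `n` corresponds to `λ_{n+1}, ν_{n+1}`). -/
def iterMeans {X : Type*} (l v : X → X → X) : ℕ → (X → X → X) × (X → X → X)
  | 0 => (l, v)
  | n+1 =>
      (fun x y => l ((iterMeans l v n).1 x y) ((iterMeans l v n).2 x y),
       fun x y => v ((iterMeans l v n).1 x y) ((iterMeans l v n).2 x y))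

theorem iterated_composition_exists_nonexpansive {X : Type*} [MetricSpace X] [CompleteSpace X]
    (l v : X → X → X)
    (hlmean : ∀ x, l x x = x) (hlsym : ∀ x y, l x y = l y x)
    (hlconv : ∀ x y z, dist (l x z) (l y z) ≤ (1/2) * dist x y)
    (hvmean : ∀ x, v x x = x)
    (hvne : ∀ x y u w : X, dist (v x y) (v u w) ≤ max (dist x u) (dist y w)) :
    ∃ μ : X → X → X,
      (∀ x y : X,
        Filter.Tendsto (fun n => (iterMeans l v n).1 x y) Filter.atTop (nhds (μ x y)) ∧
        Filter.Tendsto (fun n => (iterMeans l v n).2 x y) Filter.atTop (nhds (μ x y))) ∧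
      (∀ x, μ x x = x) ∧
      (∀ x y u w : X, dist (μ x y) (μ u w) ≤ max (dist x u) (dist y w)) := by
  -- distances from l a b to a and b
  have hma : ∀ a b : X, dist (l a b) a ≤ (1/2) * dist a b := by
    intro a b
    calc dist (l a b) a = dist (l b a) (l a a) := by rw [hlsym a b, hlmean]
      _ ≤ (1/2) * dist b a := hlconv b a a
      _ = (1/2) * dist a b := by rw [dist_comm]
  have hmb : ∀ a b : X, dist (l a b) b ≤ (1/2) * dist a b := by
    intro a b
    calc dist (l a b) b = dist (l a b) (l b b) := by rw [hlmean]
      _ ≤ (1/2) * dist a b := hlconv a b b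
  -- the key contraction
  have key : ∀ a b : X, dist (l a b) (v a b) ≤ (1/2) * dist a b := by
    intro a b
    calc dist (l a b) (v a b) = dist (v (l a b) (l a b)) (v a b) := by rw [hvmean]
      _ ≤ max (dist (l a b) a) (dist (l a b) b) := hvne _ _ _ _
      _ ≤ (1/2) * dist a b := max_le (hma a b) (hmb a b)
  -- l is nonexpansive
  have hlne : ∀ x y u w : X, dist (l x y) (l u w) ≤ max (dist x u) (dist y w) := by
    intro x y u w
    have h1 : dist (l x y) (l u y) ≤ (1/2) * dist x u := hlconv x u y
    have h2 : dist (l u y) (l u w) ≤ (1/2) * dist y w := by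
      rw [hlsym u y, hlsym u w]; exact hlconv y w u
    have hx : dist x u ≤ max (dist x u) (dist y w) := le_max_left _ _
    have hy : dist y w ≤ max (dist x u) (dist y w) := le_max_right _ _
    calc dist (l x y) (l u w) ≤ dist (l x y) (l u y) + dist (l u y) (l u w) := dist_triangle _ _ _
      _ ≤ (1/2) * dist x u + (1/2) * dist y w := add_le_add h1 h2
      _ ≤ max (dist x u) (dist y w) := by linarith
  set f : X → X → ℕ → X := fun x y n => (iterMeans l v n).1 x y with hf
  set g : X → X → ℕ → X := fun x y n => (iterMeans l v n).2 x y with hg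
  have hfs : ∀ x y n, f x y (n+1) = l (f x y n) (g x y n) := fun _ _ _ => rfl
  have hgs : ∀ x y n, g x y (n+1) = v (f x y n) (g x y n) := fun _ _ _ => rfl
  -- geometric bound on dist (f n) (g n)
  have geo : ∀ x y n, dist (f x y n) (g x y n) ≤ (1/2)^n * dist (l x y) (v x y) := by
    intro x y n
    induction n with
    | zero => simp [hf, hg, iterMeans]
    | succ n ih =>
      have h := key (f x y n) (g x y n)
      rw [hfs, hgs]
      calc dist (l (f x y n) (g x y n)) (v (f x y n) (g x y n))
          ≤ (1/2) * dist (f x y n) (g x y n) := h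
        _ ≤ (1/2) * ((1/2)^n * dist (l x y) (v x y)) := by linarith
        _ = (1/2)^(n+1) * dist (l x y) (v x y) := by ring
  -- f is Cauchy
  have hcauchy : ∀ x y : X, CauchySeq (f x y) := by
    intro x y
    apply cauchySeq_of_le_geometric (1/2 : ℝ) (dist (l x y) (v x y)) (by norm_num)
    intro n
    have h1 : dist (f x y n) (f x y (n+1)) ≤ (1/2) * dist (f x y n) (g x y n) := by
      rw [hfs, dist_comm]; exact hma _ _
    have h2 := geo x y n
    have hd : (0:ℝ) ≤ dist (l x y) (v x y) := dist_nonneg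
    have hp : (0:ℝ) ≤ (1/2:ℝ)^n := by positivity
    calc dist (f x y n) (f x y (n+1)) ≤ (1/2) * ((1/2)^n * dist (l x y) (v x y)) := by linarith
      _ ≤ dist (l x y) (v x y) * (1/2)^n := by nlinarith
  have hex : ∀ x y : X, ∃ c, Filter.Tendsto (f x y) Filter.atTop (nhds c) :=
    fun x y => cauchySeq_tendsto_of_complete (hcauchy x y)
  refine ⟨fun x y => (hex x y).choose, ?_, ?_, ?_⟩
  · intro x y
    have hft : Filter.Tendsto (f x y) Filter.atTop (nhds ((hex x y).choose)) :=
      (hex x y).choose_spec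
    have hdist0 : Filter.Tendsto (fun n => dist (f x y n) (g x y n)) Filter.atTop (nhds 0) := by
      apply squeeze_zero (fun n => dist_nonneg) (geo x y)
      have := (tendsto_pow_atTop_nhds_zero_of_lt_one (by norm_num : (0:ℝ) ≤ 1/2)
        (by norm_num : (1/2:ℝ) < 1)).mul_const (dist (l x y) (v x y))
      simpa using this
    exact ⟨hft, hft.congr_dist hdist0⟩
  · intro x
    have hboth : ∀ n, f x x n = x ∧ g x x n = x := by
      intro n
      induction n with
      | zero => exact ⟨hlmean x, hvmean x⟩
      | succ n ih => rw [hfs, hgs, ih.1, ih.2, hlmean, hvmean]; exact ⟨rfl, rfl⟩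
    have hconst : ∀ n, f x x n = x := fun n => (hboth n).1
    have : Filter.Tendsto (f x x) Filter.atTop (nhds x) := by
      rw [show f x x = fun _ => x from funext hconst]; exact tendsto_const_nhds
    exact tendsto_nhds_unique (hex x x).choose_spec this
  · intro x y u w
    have hne : ∀ n, dist (f x y n) (f u w n) ≤ max (dist x u) (dist y w) ∧
        dist (g x y n) (g u w n) ≤ max (dist x u) (dist y w) := by
      intro n
      induction n with
      | zero => exact ⟨hlne x y u w, hvne x y u w⟩
      | succ n ih =>
        constructor
        · rw [hfs, hfs]
          exact le_trans (hlne _ _ _ _) (max_le ih.1 ih.2)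
        · rw [hgs, hgs]
          exact le_trans (hvne _ _ _ _) (max_le ih.1 ih.2)
    have h1 := (hex x y).choose_spec
    have h2 := (hex u w).choose_spec
    have := h1.dist h2
    exact le_of_tendsto this (Filter.Eventually.of_forall fun n => (hne n).1)
end

section
/- Let λ be a convex mean and ν a nonexpansive, coordinatewise ρ'-contractive 2-mean (0 < ρ' < 1) on a complete metric space X. Then the iterated composition μ = λ*ν exists and is coordinatewise ρ-contractive with ρ = max{1/2, ρ'}: d(μ(a,b), μ(a,c)) ≤ ρ d(b,c) for all a,b,c ∈ X. -/
theorem iterated_composition_contractive {X : Type*} [MetricSpace X] [CompleteSpace X]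
    (l v : X → X → X) {ρ' : ℝ} (hρ'0 : 0 < ρ') (hρ'1 : ρ' < 1)
    (hlmean : ∀ x, l x x = x) (hlsym : ∀ x y, l x y = l y x)
    (hlconv : ∀ x y z, dist (l x z) (l y z) ≤ (1/2) * dist x y)
    (hvmean : ∀ x, v x x = x)
    (hvne : ∀ x y u w : X, dist (v x y) (v u w) ≤ max (dist x u) (dist y w))
    (hvcon : ∀ a b c : X, dist (v a b) (v a c) ≤ ρ' * dist b c ∧
      dist (v b a) (v c a) ≤ ρ' * dist b c) :
    ∃ μ : X → X → X,
      (∀ x y : X,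
        Filter.Tendsto (fun n => (iterMeans l v n).1 x y) Filter.atTop (nhds (μ x y)) ∧
        Filter.Tendsto (fun n => (iterMeans l v n).2 x y) Filter.atTop (nhds (μ x y))) ∧
      (∀ a b c : X, dist (μ a b) (μ a c) ≤ max (1/2) ρ' * dist b c) := by
  set ρ : ℝ := max (1/2) ρ' with hρdef
  have hρ0 : (0:ℝ) ≤ ρ := le_trans (by norm_num) (le_max_left _ _)
  -- l(x,y) is within half the distance of both endpoints
  have hla : ∀ x y : X, dist (l x y) x ≤ (1/2) * dist x y := by
    intro x y
    calc dist (l x y) x = dist (l y x) (l x x) := by rw [hlsym, hlmean]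
    _ ≤ (1/2) * dist y x := hlconv y x x
    _ = (1/2) * dist x y := by rw [dist_comm]
  have hlb : ∀ x y : X, dist (l x y) y ≤ (1/2) * dist x y := by
    intro x y
    calc dist (l x y) y = dist (l x y) (l y y) := by rw [hlmean]
    _ ≤ (1/2) * dist x y := hlconv x y y
  -- the gap between the two sequences shrinks geometrically
  have hgap : ∀ x y : X, ∀ n, dist ((iterMeans l v n).1 x y) ((iterMeans l v n).2 x y)
      ≤ (1/2)^n * dist (l x y) (v x y) := by
    intro x y n
    induction n with
    | zero => simp [iterMeans]
    | succ n ih =>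
      have key : dist ((iterMeans l v (n+1)).1 x y) ((iterMeans l v (n+1)).2 x y)
          ≤ (1/2) * dist ((iterMeans l v n).1 x y) ((iterMeans l v n).2 x y) := by
        set a := (iterMeans l v n).1 x y
        set b := (iterMeans l v n).2 x y
        show dist (l a b) (v a b) ≤ (1/2) * dist a b
        calc dist (l a b) (v a b) = dist (v (l a b) (l a b)) (v a b) := by rw [hvmean]
        _ ≤ max (dist (l a b) a) (dist (l a b) b) := hvne _ _ _ _
        _ ≤ (1/2) * dist a b := max_le (hla a b) (hlb a b)
      calc dist ((iterMeans l v (n+1)).1 x y) ((iterMeans l v (n+1)).2 x y)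
          ≤ (1/2) * ((1/2)^n * dist (l x y) (v x y)) :=
            key.trans (by nlinarith [ih])
      _ = (1/2)^(n+1) * dist (l x y) (v x y) := by ring
  -- the first sequence is Cauchy
  have hcauchy : ∀ x y : X, CauchySeq (fun n => (iterMeans l v n).1 x y) := by
    intro x y
    apply cauchySeq_of_le_geometric (1/2) ((1/2) * dist (l x y) (v x y)) (by norm_num)
    intro n
    have h1 : dist ((iterMeans l v n).1 x y) ((iterMeans l v (n+1)).1 x y)
        ≤ (1/2) * dist ((iterMeans l v n).1 x y) ((iterMeans l v n).2 x y) := by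
      rw [dist_comm]
      exact hla _ _
    calc dist ((iterMeans l v n).1 x y) ((iterMeans l v (n+1)).1 x y)
        ≤ (1/2) * ((1/2)^n * dist (l x y) (v x y)) := h1.trans (by nlinarith [hgap x y n])
    _ = (1/2) * dist (l x y) (v x y) * (1/2)^n := by ring
  have hex : ∀ x y : X, ∃ p : X,
      Filter.Tendsto (fun n => (iterMeans l v n).1 x y) Filter.atTop (nhds p) :=
    fun x y => cauchySeq_tendsto_of_complete (hcauchy x y)
  choose μ hμ using hex
  -- the second sequence tends to the same limit
  have hgapto0 : ∀ x y : X, Filter.Tendsto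
      (fun n => dist ((iterMeans l v n).1 x y) ((iterMeans l v n).2 x y))
      Filter.atTop (nhds 0) := by
    intro x y
    have hbd : Filter.Tendsto (fun n : ℕ => (1/2:ℝ)^n * dist (l x y) (v x y))
        Filter.atTop (nhds 0) := by
      have := (tendsto_pow_atTop_nhds_zero_of_lt_one (by norm_num : (0:ℝ) ≤ 1/2)
        (by norm_num : (1/2:ℝ) < 1)).mul_const (dist (l x y) (v x y))
      simpa using this
    exact squeeze_zero (fun n => dist_nonneg) (hgap x y) hbd
  have hν : ∀ x y : X, Filter.Tendsto (fun n => (iterMeans l v n).2 x y)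
      Filter.atTop (nhds (μ x y)) := by
    intro x y
    rw [tendsto_iff_dist_tendsto_zero]
    apply squeeze_zero (fun n => dist_nonneg)
      (fun n => dist_triangle ((iterMeans l v n).2 x y) ((iterMeans l v n).1 x y) (μ x y))
    have h2 : Filter.Tendsto (fun n => dist ((iterMeans l v n).2 x y)
        ((iterMeans l v n).1 x y)) Filter.atTop (nhds 0) := by
      simpa [dist_comm] using hgapto0 x y
    have h3 : Filter.Tendsto (fun n => dist ((iterMeans l v n).1 x y) (μ x y))
        Filter.atTop (nhds 0) := (tendsto_iff_dist_tendsto_zero).mp (hμ x y)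
    simpa using h2.add h3
  -- the contraction property at each finite stage
  have hcontr : ∀ (a b c : X) (n : ℕ),
      dist ((iterMeans l v n).1 a b) ((iterMeans l v n).1 a c) ≤ ρ * dist b c ∧
      dist ((iterMeans l v n).2 a b) ((iterMeans l v n).2 a c) ≤ ρ * dist b c := by
    intro a b c n
    induction n with
    | zero =>
      constructor
      · show dist (l a b) (l a c) ≤ ρ * dist b c
        calc dist (l a b) (l a c) = dist (l b a) (l c a) := by rw [hlsym a b, hlsym a c]
        _ ≤ (1/2) * dist b c := hlconv b c a
        _ ≤ ρ * dist b c := mul_le_mul_of_nonneg_right (le_max_left _ _) dist_nonneg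
      · show dist (v a b) (v a c) ≤ ρ * dist b c
        exact (hvcon a b c).1.trans
          (mul_le_mul_of_nonneg_right (le_max_right _ _) dist_nonneg)
    | succ n ih =>
      obtain ⟨ih1, ih2⟩ := ih
      set p := (iterMeans l v n).1 a b
      set q := (iterMeans l v n).2 a b
      set p' := (iterMeans l v n).1 a c
      set q' := (iterMeans l v n).2 a c
      constructor
      · show dist (l p q) (l p' q') ≤ ρ * dist b c
        have t1 : dist (l p q) (l p' q) ≤ (1/2) * dist p p' := hlconv p p' q
        have t2 : dist (l p' q) (l p' q') ≤ (1/2) * dist q q' := by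
          rw [hlsym p' q, hlsym p' q']
          exact hlconv q q' p'
        calc dist (l p q) (l p' q') ≤ dist (l p q) (l p' q) + dist (l p' q) (l p' q') :=
              dist_triangle _ _ _
        _ ≤ (1/2) * dist p p' + (1/2) * dist q q' := add_le_add t1 t2
        _ ≤ (1/2) * (ρ * dist b c) + (1/2) * (ρ * dist b c) := by
              gcongr <;> norm_num
        _ = ρ * dist b c := by ring
      · show dist (v p q) (v p' q') ≤ ρ * dist b c
        exact (hvne p q p' q').trans (max_le ih1 ih2)
  refine ⟨μ, fun x y => ⟨hμ x y, hν x y⟩, fun a b c => ?_⟩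
  have hd : Filter.Tendsto
      (fun n => dist ((iterMeans l v n).1 a b) ((iterMeans l v n).1 a c))
      Filter.atTop (nhds (dist (μ a b) (μ a c))) := (hμ a b).dist (hμ a c)
  exact le_of_tendsto hd (Filter.Eventually.of_forall fun n => (hcontr a b c n).1)
end

section
/- Let (X,μ) and (Y,ν) be topological k-means and g: X → Y a continuous map with g ∘ μ = ν ∘ g_k, where g_k applies g coordinatewise. If g is surjective and μ's barycentric operator is power convergent with β-extension μ̃, then ν's barycentric operator is power convergent with some β-extension ν̃, and g ∘ μ̃ = ν̃ ∘ g_{k+1}. -/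
/-! Applying `g` coordinatewise intertwines `bary μ` with `bary ν`, so it carries convergent
`bary μ`-orbits to convergent `bary ν`-orbits. Every tuple in `Y` lifts along the surjection `g`,
and since limits in the Hausdorff space `Y` are unique, the limit of the pushed orbit depends only
on `g ∘ x`, not on the lift `x`. -/

open Filter Topology

section

variable {X Y : Type*} {k : ℕ} {μ : (Fin k → X) → X} {ν : (Fin k → Y) → Y} {g : X → Y}

theorem semiconj_comp_bary (hhom : ∀ x : Fin k → X, g (μ x) = ν (g ∘ x)) :
    Function.Semiconj (g ∘ ·) (bary μ) (bary ν) :=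
  fun _ => funext fun _ => hhom _

theorem tendsto_iterate_bary_comp [TopologicalSpace X] [TopologicalSpace Y] (hg : Continuous g)
    (hhom : ∀ x : Fin k → X, g (μ x) = ν (g ∘ x)) {x : Fin (k+1) → X} {c : X}
    (hx : Tendsto (fun n => (bary μ)^[n] x) atTop (𝓝 fun _ => c)) :
    Tendsto (fun n => (bary ν)^[n] (g ∘ x)) atTop (𝓝 fun _ => g c) := by
  have hcomp : Continuous fun f : Fin (k+1) → X => g ∘ f := by fun_prop
  exact ((hcomp.tendsto _).comp hx).congr fun n => (semiconj_comp_bary hhom).iterate_right n x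

end

theorem surjective_homomorphism_pushes_extension_general
    {X Y : Type*} [TopologicalSpace X] [TopologicalSpace Y] [T2Space Y]
    {k : ℕ} (μ : (Fin k → X) → X) (ν : (Fin k → Y) → Y)
    (g : X → Y) (hgcont : Continuous g) (hgsurj : Function.Surjective g)
    (hhom : ∀ x : Fin k → X, g (μ x) = ν (g ∘ x))
    (μt : (Fin (k+1) → X) → X)
    (hμt : ∀ x : Fin (k+1) → X,
      Filter.Tendsto (fun n => (bary μ)^[n] x) Filter.atTop (nhds fun _ => μt x)) :
    ∃ νt : (Fin (k+1) → Y) → Y,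
      (∀ y : Fin (k+1) → Y,
        Filter.Tendsto (fun n => (bary ν)^[n] y) Filter.atTop (nhds fun _ => νt y)) ∧
      (∀ x : Fin (k+1) → X, g (μt x) = νt (g ∘ x)) := by
  obtain ⟨s, hs⟩ := hgsurj.hasRightInverse
  have hlift : ∀ y : Fin (k+1) → Y, g ∘ s ∘ y = y := fun y => funext fun i => hs (y i)
  have hpush := fun x => tendsto_iterate_bary_comp hgcont hhom (hμt x)
  refine ⟨fun y => g (μt (s ∘ y)), fun y => ?_, fun x => ?_⟩
  · simpa only [hlift] using hpush (s ∘ y)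
  · have hrelift := hpush (s ∘ g ∘ x)
    rw [hlift] at hrelift
    exact congrFun (tendsto_nhds_unique (hpush x) hrelift) 0

theorem surjective_homomorphism_pushes_extension
    {X Y : Type*} [TopologicalSpace X] [TopologicalSpace Y] [T2Space X] [T2Space Y]
    {k : ℕ} (μ : (Fin k → X) → X) (ν : (Fin k → Y) → Y)
    (hμmean : IsMean μ) (hμcont : Continuous μ)
    (hνmean : IsMean ν) (hνcont : Continuous ν)
    (g : X → Y) (hgcont : Continuous g) (hgsurj : Function.Surjective g)
    (hhom : ∀ x : Fin k → X, g (μ x) = ν (g ∘ x))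
    (μt : (Fin (k+1) → X) → X)
    (hμt : ∀ x : Fin (k+1) → X,
      Filter.Tendsto (fun n => (bary μ)^[n] x) Filter.atTop (nhds fun _ => μt x)) :
    ∃ νt : (Fin (k+1) → Y) → Y,
      (∀ y : Fin (k+1) → Y,
        Filter.Tendsto (fun n => (bary ν)^[n] y) Filter.atTop (nhds fun _ => νt y)) ∧
      (∀ x : Fin (k+1) → X, g (μt x) = νt (g ∘ x)) :=
  surjective_homomorphism_pushes_extension_general μ ν g hgcont hgsurj hhom μt hμt
end

section
/- Let X be a complete metric space with a coordinatewise ρ-contractive (k+1)-mean ν (0 < ρ < 1, k ≥ 2). Then there exists a unique k-mean μ on X that is a stable reduction of ν, i.e., ν(x_1,...,x_k, μ(x_1,...,x_k)) = μ(x_1,...,x_k) for all x_1,...,x_k ∈ X. If ν is symmetric, so is μ. -/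
def IsStableReduction {X : Type*} {k : ℕ} (ν : (Fin (k+1) → X) → X) (μ : (Fin k → X) → X) :
    Prop :=
  ∀ x : Fin k → X, ν (Fin.snoc x (μ x)) = μ x

def Equiv.Perm.extendLast {k : ℕ} (σ : Equiv.Perm (Fin k)) : Equiv.Perm (Fin (k+1)) :=
  (finSuccEquivLast.trans σ.optionCongr).trans finSuccEquivLast.symm

theorem Fin.snoc_comp_extendLast {X : Type*} {k : ℕ} (σ : Equiv.Perm (Fin k))
    (x : Fin k → X) (t : X) :
    (Fin.snoc x t : Fin (k+1) → X) ∘ σ.extendLast = Fin.snoc (x ∘ σ) t := by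
  funext i
  induction i using Fin.lastCases <;> simp [Equiv.Perm.extendLast]

namespace CoordContractive

variable {X : Type*} [MetricSpace X] {k : ℕ} {ρ : ℝ} {ν : (Fin (k+1) → X) → X}

theorem dist_snoc_le (hν : CoordContractive ρ ν) (x : Fin k → X) (s t : X) :
    dist (ν (Fin.snoc x s)) (ν (Fin.snoc x t)) ≤ ρ * dist s t := by
  have h := hν (Fin.snoc x s) (Fin.snoc x t) (Fin.last k) fun i hi => by
    obtain ⟨j, rfl⟩ := Fin.exists_castSucc_eq.mpr hi
    simp
  simpa using h

theorem contractingWith_snoc (hν : CoordContractive ρ ν) (hρ : ρ < 1) (x : Fin k → X) :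
    ContractingWith ρ.toNNReal fun t => ν (Fin.snoc x t) :=
  ⟨Real.toNNReal_lt_one.mpr hρ, LipschitzWith.of_dist_le' (hν.dist_snoc_le x)⟩

theorem snoc_fixed_unique (hν : CoordContractive ρ ν) (hρ : ρ < 1) {x : Fin k → X} {s t : X}
    (hs : ν (Fin.snoc x s) = s) (ht : ν (Fin.snoc x t) = t) : s = t :=
  (hν.contractingWith_snoc hρ x).fixedPoint_unique' hs ht

theorem exists_snoc_fixed [CompleteSpace X] [NeZero k] (hν : CoordContractive ρ ν) (hρ : ρ < 1)
    (x : Fin k → X) : ∃ t, ν (Fin.snoc x t) = t :=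
  have : Nonempty X := ⟨x 0⟩
  ⟨_, (hν.contractingWith_snoc hρ x).fixedPoint_isFixedPt⟩

end CoordContractive

section StableReduction

variable {X : Type*} [MetricSpace X] {k : ℕ} {ρ : ℝ} {ν : (Fin (k+1) → X) → X}
  {μ μ' : (Fin k → X) → X}

noncomputable def stableReduction [CompleteSpace X] [NeZero k] (hν : CoordContractive ρ ν)
    (hρ : ρ < 1) : (Fin k → X) → X :=
  fun x => (hν.exists_snoc_fixed hρ x).choose

theorem isStableReduction_stableReduction [CompleteSpace X] [NeZero k]
    (hν : CoordContractive ρ ν) (hρ : ρ < 1) :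
    IsStableReduction ν (stableReduction hν hρ) :=
  fun x => (hν.exists_snoc_fixed hρ x).choose_spec

theorem IsStableReduction.unique (hν : CoordContractive ρ ν) (hρ : ρ < 1)
    (hμ : IsStableReduction ν μ) (hμ' : IsStableReduction ν μ') : μ = μ' :=
  funext fun x => hν.snoc_fixed_unique hρ (hμ x) (hμ' x)

theorem IsStableReduction.isMean (hν : CoordContractive ρ ν) (hρ : ρ < 1)
    (hνmean : IsMean ν) (hμ : IsStableReduction ν μ) : IsMean μ := by
  intro a
  have hconst : (Fin.snoc (fun _ : Fin k => a) a : Fin (k+1) → X) = fun _ => a := by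
    funext i
    induction i using Fin.lastCases <;> simp
  have ha : ν (Fin.snoc (fun _ => a) a) = a := by rw [hconst]; exact hνmean a
  exact hν.snoc_fixed_unique hρ (hμ _) ha

theorem IsStableReduction.symmetricMean (hν : CoordContractive ρ ν) (hρ : ρ < 1)
    (hνsym : SymmetricMean ν) (hμ : IsStableReduction ν μ) : SymmetricMean μ := by
  intro σ x
  have hx : ν (Fin.snoc (x ∘ σ) (μ x)) = μ x := by
    rw [← Fin.snoc_comp_extendLast, hνsym, hμ]
  exact hν.snoc_fixed_unique hρ (hμ _) hx

end StableReduction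

theorem stable_reduction_exists_unique_general {X : Type*} [MetricSpace X] [CompleteSpace X]
    {k : ℕ} (hk : 2 ≤ k) (ν : (Fin (k+1) → X) → X) {ρ : ℝ} (hρ1 : ρ < 1)
    (hνmean : IsMean ν) (hνcon : CoordContractive ρ ν) :
    ∃ μ : (Fin k → X) → X,
      (IsMean μ ∧ ∀ x : Fin k → X, ν (Fin.snoc x (μ x)) = μ x) ∧
      (∀ μ' : (Fin k → X) → X, (∀ x : Fin k → X, ν (Fin.snoc x (μ' x)) = μ' x) → μ' = μ) ∧
      (SymmetricMean ν → SymmetricMean μ) := by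
  have : NeZero k := ⟨by omega⟩
  have hμ := isStableReduction_stableReduction hνcon hρ1
  exact ⟨_, ⟨hμ.isMean hνcon hρ1 hνmean, hμ⟩,
    fun _ hμ' => IsStableReduction.unique hνcon hρ1 hμ' hμ,
    fun hνsym => hμ.symmetricMean hνcon hρ1 hνsym⟩

theorem stable_reduction_exists_unique {X : Type*} [MetricSpace X] [CompleteSpace X]
    {k : ℕ} (hk : 2 ≤ k) (ν : (Fin (k+1) → X) → X) {ρ : ℝ} (hρ0 : 0 < ρ) (hρ1 : ρ < 1)
    (hνmean : IsMean ν) (hνcon : CoordContractive ρ ν) :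
    ∃ μ : (Fin k → X) → X,
      (IsMean μ ∧ ∀ x : Fin k → X, ν (Fin.snoc x (μ x)) = μ x) ∧
      (∀ μ' : (Fin k → X) → X, (∀ x : Fin k → X, ν (Fin.snoc x (μ' x)) = μ' x) → μ' = μ) ∧
      (SymmetricMean ν → SymmetricMean μ) :=
  stable_reduction_exists_unique_general hk ν hρ1 hνmean hνcon
end

section
/- For each positive integer n there exists ρ_n with 0 < ρ_n < 1 such that the arithmetic mean A(X,Y) = (X+Y)/2 is coordinatewise ρ_n-contractive with respect to the Thompson metric on the order interval [(1/n)I, nI] of positive definite operators: for all A, B, C in [(1/n)I, nI], d((A+B)/2, (A+C)/2) ≤ ρ_n d(B,C). -/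
/-!
For `A, B, C` in `[a I, b I]` put `K = b / a` and `m = exp d(B, C) ∈ [1, K]`, so that `B ≤ m C`
and `C ≤ m B` (the infimum defining `M` is attained because the Loewner cone is closed). With
`Λ = (K m + 1) / (K + 1)` one has `(Λ - 1) a = (m - Λ) b`, hence `(Λ - 1) A ≥ (m - Λ) B` and
`A + C ≤ A + m B ≤ Λ (A + B)`; with the symmetric bound this gives
`d((A + B) / 2, (A + C) / 2) ≤ log Λ`. Since `t ↦ log (K eᵗ + 1)` is convex, its value at
`t = log m` lies below the chord over `[0, log K]`, which reads `log Λ ≤ ρ log m` with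
`ρ = log ((K² + 1) / (K + 1)) / log K ∈ (0, 1)`.
-/

open ContinuousLinearMap

variable {E : Type*} [NormedAddCommGroup E] [InnerProductSpace ℂ E] [CompleteSpace E]

/-- Positive definite: positive and invertible. -/
def IsPosDef (A : E →L[ℂ] E) : Prop := A.IsPositive ∧ IsUnit A

/-- `M(A/B) = inf {t > 0 : A ≤ t B}` (in the Loewner order). -/
noncomputable def Mratio (A B : E →L[ℂ] E) : ℝ :=
  sInf {t : ℝ | 0 < t ∧ (t • B - A).IsPositive}

/-- The Thompson (part) metric. -/
noncomputable def thompsonDist (A B : E →L[ℂ] E) : ℝ :=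
  max (Real.log (Mratio A B)) (Real.log (Mratio B A))

/-- Membership in the order interval `[(1/n)I, nI]`. -/
def InOrderInterval (n : ℕ) (X : E →L[ℂ] E) : Prop :=
  (X - ((n : ℝ)⁻¹ : ℝ) • (1 : E →L[ℂ] E)).IsPositive ∧
    ((n : ℝ) • (1 : E →L[ℂ] E) - X).IsPositive

open Real Set

lemma convexOn_log_mul_exp_add_one {K : ℝ} (hK : 0 ≤ K) :
    ConvexOn ℝ univ fun t ↦ log (K * exp t + 1) := by
  have hderiv (t : ℝ) : HasDerivAt (fun t ↦ log (K * exp t + 1))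
      (K * exp t / (K * exp t + 1)) t :=
    (((hasDerivAt_exp t).const_mul K).add_const 1).log (by positivity)
  refine Monotone.convexOn_univ_of_deriv (fun t ↦ (hderiv t).differentiableAt) ?_
  intro s t hst
  rw [(hderiv s).deriv, (hderiv t).deriv, div_le_div_iff₀ (by positivity) (by positivity)]
  nlinarith [mul_le_mul_of_nonneg_left (exp_le_exp.2 hst) hK]

noncomputable def meanContractionRate (K : ℝ) : ℝ :=
  log ((K ^ 2 + 1) / (K + 1)) / log K

lemma meanContractionRate_pos {K : ℝ} (hK : 1 < K) : 0 < meanContractionRate K := by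
  refine div_pos (log_pos ?_) (log_pos hK)
  rw [one_lt_div (by positivity)]
  nlinarith

lemma meanContractionRate_lt_one {K : ℝ} (hK : 1 < K) : meanContractionRate K < 1 := by
  rw [meanContractionRate, div_lt_one (log_pos hK)]
  refine log_lt_log (by positivity) ?_
  rw [div_lt_iff₀ (by positivity)]
  nlinarith

lemma log_div_le_meanContractionRate_mul_log {K m : ℝ} (hK : 1 < K) (hm : 1 ≤ m)
    (hmK : m ≤ K) :
    log ((K * m + 1) / (K + 1)) ≤ meanContractionRate K * log m := by
  have hL : 0 < log K := log_pos hK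
  set θ := log m / log K
  have hθ : θ * log K = log m := div_mul_cancel₀ _ hL.ne'
  have hθ0 : 0 ≤ θ := div_nonneg (log_nonneg hm) hL.le
  have hθ1 : θ ≤ 1 := (div_le_one hL).2 (log_le_log (by linarith) hmK)
  have hchord := (convexOn_log_mul_exp_add_one (by linarith : (0:ℝ) ≤ K)).2
    (mem_univ 0) (mem_univ (log K)) (sub_nonneg.2 hθ1) hθ0 (sub_add_cancel 1 θ)
  simp only [smul_eq_mul, mul_zero, zero_add, exp_zero, mul_one, hθ,
    exp_log (by linarith : 0 < K), exp_log (by linarith : 0 < m)] at hchord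
  rw [log_div (by positivity) (by positivity), meanContractionRate,
    log_div (by positivity) (by positivity), div_mul_comm, sq]
  linarith

section Loewner

variable {H : Type*} [NormedAddCommGroup H] [InnerProductSpace ℂ H] {X Y : H →L[ℂ] H}

lemma Mratio_nonneg : 0 ≤ Mratio X Y :=
  Real.sInf_nonneg fun _ ht ↦ ht.1.le

lemma Mratio_le {t : ℝ} (ht : 0 < t) (h : X ≤ t • Y) : Mratio X Y ≤ t :=
  csInf_le ⟨0, fun _ hs ↦ hs.1.le⟩ ⟨ht, h⟩

lemma le_Mratio_smul [CompleteSpace H] (h : ∃ t : ℝ, 0 < t ∧ X ≤ t • Y) :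
    X ≤ Mratio X Y • Y := by
  have hclosed : IsClosed {t : ℝ | X ≤ t • Y} :=
    isClosed_le continuous_const (continuous_id.smul continuous_const)
  exact closure_minimal (fun t ht ↦ ht.2) hclosed
    (csInf_mem_closure h ⟨0, fun _ hs ↦ hs.1.le⟩)

lemma Mratio_pos [CompleteSpace H] [Nontrivial H] {a t : ℝ} (ha : 0 < a) (hX : a • 1 ≤ X)
    (ht : 0 < t) (h : X ≤ t • Y) : 0 < Mratio X Y := by
  refine Mratio_nonneg.lt_of_ne fun h0 ↦ ?_
  have hle := hX.trans (le_Mratio_smul ⟨t, ht, h⟩)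
  rw [← h0, zero_smul, ← zero_smul ℝ (1 : H →L[ℂ] H)] at hle
  simp only [← Algebra.algebraMap_eq_smul_one, algebraMap_le_algebraMap] at hle
  linarith

lemma log_Mratio_le {t : ℝ} (ht : 1 ≤ t) (h : X ≤ t • Y) : log (Mratio X Y) ≤ log t := by
  rcases (Mratio_nonneg (X := X) (Y := Y)).eq_or_lt with h0 | hpos
  · rw [← h0, log_zero]
    exact log_nonneg ht
  · exact log_le_log hpos (Mratio_le (by linarith) h)

lemma thompsonDist_comm (X Y : H →L[ℂ] H) : thompsonDist X Y = thompsonDist Y X :=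
  max_comm _ _

lemma thompsonDist_le_log {t : ℝ} (ht : 1 ≤ t) (hXY : X ≤ t • Y) (hYX : Y ≤ t • X) :
    thompsonDist X Y ≤ log t :=
  max_le (log_Mratio_le ht hXY) (log_Mratio_le ht hYX)

lemma thompsonDist_eq_zero_of_subsingleton [Subsingleton H] : thompsonDist X Y = 0 := by
  have hM (X Y : H →L[ℂ] H) : Mratio X Y = 0 := by
    have : {t : ℝ | 0 < t ∧ X ≤ t • Y} = Ioi 0 := by
      ext t
      simp [Subsingleton.elim X (t • Y)]
    exact (congrArg sInf this).trans csInf_Ioi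
  simp [thompsonDist, hM]

lemma one_le_of_le_smul_self [CompleteSpace H] [Nontrivial H] {a s : ℝ} (ha : 0 < a)
    (hX : a • 1 ≤ X) (h : X ≤ s • X) : 1 ≤ s := by
  by_contra! hs
  have : ((1 - s) * a) • (1 : H →L[ℂ] H) ≤ (0 : ℝ) • 1 := calc
    ((1 - s) * a) • (1 : H →L[ℂ] H) = (1 - s) • (a • 1) := mul_smul _ _ _
    _ ≤ (1 - s) • X := smul_le_smul_of_nonneg_left hX (by linarith)
    _ ≤ (0 : ℝ) • 1 := by rw [sub_smul, one_smul, zero_smul]; exact sub_nonpos.2 h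
  simp only [← Algebra.algebraMap_eq_smul_one, algebraMap_le_algebraMap] at this
  nlinarith

lemma le_div_smul_of_le_of_le [CompleteSpace H] {a b : ℝ} (ha : 0 < a) (hb : 0 ≤ b)
    (hX : X ≤ b • 1) (hY : a • 1 ≤ Y) : X ≤ (b / a) • Y := calc
  X ≤ b • 1 := hX
  _ = (b / a) • (a • 1) := by rw [smul_smul, div_mul_cancel₀ _ ha.ne']
  _ ≤ (b / a) • Y := smul_le_smul_of_nonneg_left hY (by positivity)

end Loewner

section Interval

variable {H : Type*} [NormedAddCommGroup H] [InnerProductSpace ℂ H] [CompleteSpace H]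
  {X Y : H →L[ℂ] H} {a b : ℝ}

lemma le_exp_thompsonDist_smul [Nontrivial H] (ha : 0 < a) (hab : a ≤ b)
    (hX : X ∈ Icc (a • 1) (b • 1)) (hY : Y ∈ Icc (a • 1) (b • 1)) :
    X ≤ exp (thompsonDist X Y) • Y := by
  have hXY := le_div_smul_of_le_of_le ha (ha.le.trans hab) hX.2 hY.1
  have hb : 0 < b / a := div_pos (ha.trans_le hab) ha
  have hpos : 0 < Mratio X Y := Mratio_pos ha hX.1 hb hXY
  have hY0 : 0 ≤ Y := (smul_nonneg ha.le zero_le_one).trans hY.1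
  calc X ≤ Mratio X Y • Y := le_Mratio_smul ⟨b / a, hb, hXY⟩
    _ ≤ exp (thompsonDist X Y) • Y := by
      refine smul_le_smul_of_nonneg_right ?_ hY0
      rw [← exp_log hpos]
      exact exp_le_exp.2 (le_max_left _ _)

lemma thompsonDist_nonneg [Nontrivial H] (ha : 0 < a) (hab : a ≤ b)
    (hX : X ∈ Icc (a • 1) (b • 1)) (hY : Y ∈ Icc (a • 1) (b • 1)) :
    0 ≤ thompsonDist X Y := by
  have hYX : Y ≤ exp (thompsonDist X Y) • X := by
    rw [thompsonDist_comm]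
    exact le_exp_thompsonDist_smul ha hab hY hX
  set d := thompsonDist X Y
  have hXX : X ≤ (exp d * exp d) • X := calc
    X ≤ exp d • Y := le_exp_thompsonDist_smul ha hab hX hY
    _ ≤ exp d • (exp d • X) := smul_le_smul_of_nonneg_left hYX (exp_pos d).le
    _ = (exp d * exp d) • X := smul_smul _ _ _
  have := one_le_of_le_smul_self ha hX.1 hXX
  rw [← exp_add, one_le_exp_iff] at this
  linarith

lemma midpoint_le_smul_midpoint {A B C : H →L[ℂ] H} {m : ℝ} (ha : 0 < a) (hb : 0 ≤ b)
    (hm : 1 ≤ m) (hA : a • 1 ≤ A) (hB : B ≤ b • 1) (hC : C ≤ m • B) :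
    (2 : ℝ)⁻¹ • (A + C) ≤ ((b / a * m + 1) / (b / a + 1)) • ((2 : ℝ)⁻¹ • (A + B)) := by
  set K := b / a
  set Λ := (K * m + 1) / (K + 1)
  have hK : 0 ≤ K := by positivity
  have hΛ : Λ * (K + 1) = K * m + 1 := div_mul_cancel₀ _ (by positivity)
  have hΛ1 : 1 ≤ Λ := (one_le_div (by positivity)).2 (by nlinarith)
  have hΛm : Λ ≤ m := (div_le_iff₀ (by positivity)).2 (by nlinarith)
  have hbal : (Λ - 1) * a = (m - Λ) * b := by
    have hb : b = K * a := (div_mul_cancel₀ b ha.ne').symm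
    rw [hb]
    linear_combination a * hΛ
  have hsum : A + C ≤ Λ • (A + B) := calc
    A + C ≤ A + m • B := add_le_add_right hC A
    _ = Λ • (A + B) - ((Λ - 1) • A - (m - Λ) • B) := by module
    _ ≤ Λ • (A + B) - ((Λ - 1) • (a • 1) - (m - Λ) • (b • 1)) := by gcongr
    _ = Λ • (A + B) := by rw [smul_smul, smul_smul, hbal, sub_self, sub_zero]
  calc (2 : ℝ)⁻¹ • (A + C) ≤ (2 : ℝ)⁻¹ • (Λ • (A + B)) :=
        smul_le_smul_of_nonneg_left hsum (by norm_num)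
    _ = Λ • ((2 : ℝ)⁻¹ • (A + B)) := smul_comm _ _ _

theorem thompsonDist_midpoint_le {A B C : H →L[ℂ] H} (ha : 0 < a) (hab : a < b)
    (hA : A ∈ Icc (a • 1) (b • 1)) (hB : B ∈ Icc (a • 1) (b • 1))
    (hC : C ∈ Icc (a • 1) (b • 1)) :
    thompsonDist ((2 : ℝ)⁻¹ • (A + B)) ((2 : ℝ)⁻¹ • (A + C))
      ≤ meanContractionRate (b / a) * thompsonDist B C := by
  rcases subsingleton_or_nontrivial H with hH | hH
  · simp [thompsonDist_eq_zero_of_subsingleton]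
  set K := b / a
  have hb : 0 ≤ b := ha.le.trans hab.le
  have hK : 1 < K := (one_lt_div ha).2 hab
  have hCB : C ≤ exp (thompsonDist B C) • B := by
    rw [thompsonDist_comm]
    exact le_exp_thompsonDist_smul ha hab.le hC hB
  set d := thompsonDist B C
  have hBC : B ≤ exp d • C := le_exp_thompsonDist_smul ha hab.le hB hC
  have hm : 1 ≤ exp d := one_le_exp_iff.2 (thompsonDist_nonneg ha hab.le hB hC)
  have hmK : exp d ≤ K := by
    rw [← le_log_iff_exp_le (by positivity)]
    exact thompsonDist_le_log hK.le (le_div_smul_of_le_of_le ha hb hB.2 hC.1)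
      (le_div_smul_of_le_of_le ha hb hC.2 hB.1)
  calc thompsonDist ((2 : ℝ)⁻¹ • (A + B)) ((2 : ℝ)⁻¹ • (A + C))
      ≤ log ((K * exp d + 1) / (K + 1)) :=
        thompsonDist_le_log ((one_le_div (by positivity)).2 (by nlinarith))
          (midpoint_le_smul_midpoint ha hb hm hA.1 hC.2 hBC)
          (midpoint_le_smul_midpoint ha hb hm hA.1 hB.2 hCB)
    _ ≤ meanContractionRate K * log (exp d) :=
        log_div_le_meanContractionRate_mul_log hK hm hmK
    _ = meanContractionRate K * d := by rw [log_exp]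

lemma InOrderInterval.mem_Icc {n : ℕ} {c : ℝ} (hn : 0 < n) (hc : n ≤ c)
    (hX : InOrderInterval n X) : X ∈ Icc (c⁻¹ • 1) (c • 1) :=
  Icc_subset_Icc (smul_le_smul_of_nonneg_right (inv_anti₀ (by positivity) hc) zero_le_one)
    (smul_le_smul_of_nonneg_right hc zero_le_one) hX

end Interval

theorem arithmetic_mean_contractive_on_order_interval :
    ∀ n : ℕ, 0 < n → ∃ ρ : ℝ, 0 < ρ ∧ ρ < 1 ∧
      ∀ A B C : E →L[ℂ] E,
        InOrderInterval n A → InOrderInterval n B → InOrderInterval n C →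
        thompsonDist ((2 : ℝ)⁻¹ • (A + B)) ((2 : ℝ)⁻¹ • (A + C)) ≤ ρ * thompsonDist B C := by
  intro n hn
  -- at `n = 1` the interval `[1/n, n]` itself has the degenerate ratio `K = 1`
  set c : ℝ := n + 1
  have hc : 1 < c := by simpa [c] using hn
  have hK : 1 < c / c⁻¹ := by
    rw [div_inv_eq_mul]
    nlinarith
  refine ⟨meanContractionRate (c / c⁻¹), meanContractionRate_pos hK,
    meanContractionRate_lt_one hK, fun A B C hA hB hC ↦ ?_⟩
  have hnc : (n : ℝ) ≤ c := by simp [c]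
  exact thompsonDist_midpoint_le (inv_pos.2 (by positivity))
    ((inv_lt_one_of_one_lt₀ hc).trans hc) (hA.mem_Icc hn hnc) (hB.mem_Icc hn hnc)
    (hC.mem_Icc hn hnc)
end

section
/- Let X be a complete metric space with a closed partial order ≤ and a nonexpansive, coordinatewise ρ-contractive k-mean μ that is monotone (x ≤ y componentwise implies μ(x) ≤ μ(y)). Then the β-extension μ̃: X^{k+1} → X is also monotone: if x_i ≤ y_i for all 1 ≤ i ≤ k+1, then μ̃(x_1,...,x_{k+1}) ≤ μ̃(y_1,...,y_{k+1}). -/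
theorem beta_extension_monotone {X : Type*} [MetricSpace X] [CompleteSpace X] [PartialOrder X]
    (horder : IsClosed {p : X × X | p.1 ≤ p.2})
    {k : ℕ} (μ : (Fin k → X) → X) {ρ : ℝ} (hρ0 : 0 < ρ) (hρ1 : ρ < 1)
    (hmean : IsMean μ) (hne : Nonexpansive μ) (hcon : CoordContractive ρ μ)
    (hmono : ∀ x y : Fin k → X, (∀ i, x i ≤ y i) → μ x ≤ μ y)
    (ν : (Fin (k+1) → X) → X)
    (hext : ∀ x : Fin (k+1) → X,
      Filter.Tendsto (fun n => (bary μ)^[n] x) Filter.atTop (nhds fun _ => ν x)) :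
    ∀ x y : Fin (k+1) → X, (∀ i, x i ≤ y i) → ν x ≤ ν y := by
  intro x y hxy
  have hiter : ∀ n i, (bary μ)^[n] x i ≤ (bary μ)^[n] y i := by
    intro n
    induction n with
    | zero => simpa using hxy
    | succ n ih =>
      intro i
      rw [Function.iterate_succ_apply', Function.iterate_succ_apply']
      exact hmono _ _ (fun j => ih _)
  have h0 : Filter.Tendsto (fun n => ((bary μ)^[n] x 0, (bary μ)^[n] y 0))
      Filter.atTop (nhds (ν x, ν y)) := by
    exact Filter.Tendsto.prodMk_nhds
      (((continuous_apply (0 : Fin (k+1))).continuousAt).tendsto.comp (hext x))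
      (((continuous_apply (0 : Fin (k+1))).continuousAt).tendsto.comp (hext y))
  exact horder.mem_of_tendsto h0 (Filter.Eventually.of_forall fun n => hiter n 0)
end
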